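/- Fix real numbers m and λ. On the set G = ℝ × ℝ × SO(2) × ℝ × ℝ² × ℝ², with elements g = (θ, φ, R, b, v, a), define the multiplication (θ, φ, R, b, v, a)(θ′, φ′, R′, b′, v′, a′) = (θ + θ′ + (m/2)(a·Rv′ − v·Ra′ + b′ v·Rv′), φ + φ′ + (λ/2)(v ∧ Rv′), RR′, b + b′, v + Rv′, a + Ra′ + v b′), where u ∧ w = u₁w₂ − u₂w₁ for u, w ∈ ℝ². Then this multiplication is associative, has identity (0, 0, I₂, 0, 0, 0), and every element has a two-sided inverse; i.e., G is a group (the two-fold centrally extended (2+1)-Galilei group). -/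

import Mathlib

noncomputable section

/-- `SO(2)`: 2×2 real orthogonal matrices of determinant 1. -/
abbrev SO2 := Matrix.specialOrthogonalGroup (Fin 2) ℝ

/-- The underlying set of the two-fold centrally extended (2+1)-Galilei group:
elements `(θ, φ, R, b, v, a)`. -/
abbrev GalExt := ℝ × ℝ × SO2 × ℝ × (Fin 2 → ℝ) × (Fin 2 → ℝ)

/-- Euclidean dot product on ℝ². -/
def dot (u w : Fin 2 → ℝ) : ℝ := u 0 * w 0 + u 1 * w 1

/-- Wedge product on ℝ²: `u ∧ w = u₁w₂ − u₂w₁`. -/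
def wedge (u w : Fin 2 → ℝ) : ℝ := u 0 * w 1 - u 1 * w 0

/-- The multiplication law of the two-fold centrally extended (2+1)-Galilei group,
with extension (cocycle) parameters `m` and `λ`. -/
def galMul (m lam : ℝ) (g g' : GalExt) : GalExt :=
  let θ := g.1; let φ := g.2.1; let R := g.2.2.1; let b := g.2.2.2.1
  let v := g.2.2.2.2.1; let a := g.2.2.2.2.2
  let θ' := g'.1; let φ' := g'.2.1; let R' := g'.2.2.1; let b' := g'.2.2.2.1
  let v' := g'.2.2.2.2.1; let a' := g'.2.2.2.2.2
  (θ + θ' + (m / 2) * (dot a (R.1.mulVec v') - dot v (R.1.mulVec a')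
      + b' * dot v (R.1.mulVec v')),
   φ + φ' + (lam / 2) * wedge v (R.1.mulVec v'),
   R * R', b + b', v + R.1.mulVec v', a + R.1.mulVec a' + b' • v)

/-- The identity element `(0, 0, I₂, 0, 0, 0)`. -/
def galOne : GalExt := (0, 0, 1, 0, 0, 0)

/-! Rotations preserve the dot product (being orthogonal) and the wedge product (having
determinant one). Together with bilinearity, this reduces each component of the associativity
and inverse laws to a polynomial identity. -/

open Matrix

theorem dotProduct_mulVec_mulVec_of_transpose_mul_self {n R : Type*} [Fintype n] [DecidableEq n]
    [CommSemiring R] {A : Matrix n n R} (hA : Aᵀ * A = 1) (u w : n → R) :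
    A *ᵥ u ⬝ᵥ A *ᵥ w = u ⬝ᵥ w := by
  rw [dotProduct_mulVec, ← mulVec_transpose, mulVec_mulVec, hA, one_mulVec]

theorem wedge_mulVec (A : Matrix (Fin 2) (Fin 2) ℝ) (u w : Fin 2 → ℝ) :
    wedge (A *ᵥ u) (A *ᵥ w) = A.det * wedge u w := by
  simp only [wedge, mulVec, dotProduct, Fin.sum_univ_two, det_fin_two]
  ring

theorem dot_eq_dotProduct (u w : Fin 2 → ℝ) : dot u w = u ⬝ᵥ w := by
  simp [dot, dotProduct, Fin.sum_univ_two]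

namespace SO2

theorem transpose_mul_self (R : SO2) : R.1ᵀ * R.1 = 1 := by
  simpa [star_eq_conjTranspose] using R.2.1.1

@[simp]
theorem dotProduct_mulVec_mulVec (R : SO2) (u w : Fin 2 → ℝ) :
    R.1 *ᵥ u ⬝ᵥ R.1 *ᵥ w = u ⬝ᵥ w :=
  dotProduct_mulVec_mulVec_of_transpose_mul_self (transpose_mul_self R) u w

@[simp]
theorem wedge_mulVec_mulVec (R : SO2) (u w : Fin 2 → ℝ) :
    wedge (R.1 *ᵥ u) (R.1 *ᵥ w) = wedge u w := by
  rw [wedge_mulVec, (mem_specialOrthogonalGroup_iff.mp R.2).2, one_mul]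

@[simp]
theorem mulVec_inv_mulVec (R : SO2) (x : Fin 2 → ℝ) : R.1 *ᵥ (R⁻¹.1 *ᵥ x) = x := by
  rw [mulVec_mulVec, ← Submonoid.coe_mul, mul_inv_cancel, Submonoid.coe_one, one_mulVec]

end SO2

theorem wedge_neg_left (u w : Fin 2 → ℝ) : wedge (-u) w = -wedge u w := by
  simp only [wedge, Pi.neg_apply]; ring

theorem wedge_neg_right (u w : Fin 2 → ℝ) : wedge u (-w) = -wedge u w := by
  simp only [wedge, Pi.neg_apply]; ring

theorem wedge_self (u : Fin 2 → ℝ) : wedge u u = 0 := by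
  rw [wedge]; ring

theorem wedge_add_left (u v w : Fin 2 → ℝ) : wedge (u + v) w = wedge u w + wedge v w := by
  simp only [wedge, Pi.add_apply]; ring

theorem wedge_add_right (u v w : Fin 2 → ℝ) : wedge u (v + w) = wedge u v + wedge u w := by
  simp only [wedge, Pi.add_apply]; ring

theorem galMul_assoc (m lam : ℝ) (g g' g'' : GalExt) :
    galMul m lam (galMul m lam g g') g'' = galMul m lam g (galMul m lam g' g'') := by
  obtain ⟨θ, φ, R, b, v, a⟩ := g
  obtain ⟨θ', φ', R', b', v', a'⟩ := g'
  obtain ⟨θ'', φ'', R'', b'', v'', a''⟩ := g''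
  simp only [galMul, Prod.mk.injEq, Submonoid.coe_mul, ← mulVec_mulVec, mulVec_add, mulVec_smul,
    dot_eq_dotProduct, add_dotProduct, dotProduct_add, smul_dotProduct, dotProduct_smul,
    wedge_add_left, wedge_add_right, SO2.dotProduct_mulVec_mulVec, SO2.wedge_mulVec_mulVec]
  refine ⟨by ring, by ring, mul_assoc .., by ring, add_assoc .., by module⟩

theorem galOne_galMul (m lam : ℝ) (g : GalExt) : galMul m lam galOne g = g := by
  simp [galMul, galOne, dot, wedge]

theorem galMul_galOne (m lam : ℝ) (g : GalExt) : galMul m lam g galOne = g := by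
  simp [galMul, galOne, dot, wedge]

def galInv (g : GalExt) : GalExt :=
  let ⟨θ, φ, R, b, v, a⟩ := g
  (-θ, -φ, R⁻¹, -b, -(R⁻¹.1 *ᵥ v), R⁻¹.1 *ᵥ (b • v - a))

theorem galMul_galInv (m lam : ℝ) (g : GalExt) : galMul m lam g (galInv g) = galOne := by
  obtain ⟨θ, φ, R, b, v, a⟩ := g
  simp only [galMul, galInv, galOne, Prod.mk.injEq, mulVec_neg, SO2.mulVec_inv_mulVec,
    dot_eq_dotProduct, dotProduct_neg, dotProduct_sub, dotProduct_smul, wedge_neg_right, wedge_self]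
  refine ⟨?_, by ring, mul_inv_cancel R, by ring, by abel, by module⟩
  rw [dotProduct_comm a v]
  ring

theorem galInv_galMul (m lam : ℝ) (g : GalExt) : galMul m lam (galInv g) g = galOne := by
  obtain ⟨θ, φ, R, b, v, a⟩ := g
  simp only [galMul, galInv, galOne, Prod.mk.injEq, dot_eq_dotProduct, neg_dotProduct,
    SO2.dotProduct_mulVec_mulVec, sub_dotProduct, smul_dotProduct, wedge_neg_left, wedge_self]
  refine ⟨?_, by ring, inv_mul_cancel R, by ring, by abel, ?_⟩
  · rw [dotProduct_comm a v]
    ring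
  · rw [mulVec_sub, mulVec_smul]
    module

/-- The multiplication of the two-fold centrally extended (2+1)-Galilei group is
associative, has `(0, 0, I₂, 0, 0, 0)` as a two-sided identity, and every element has
a two-sided inverse; i.e., it makes `ℝ × ℝ × SO(2) × ℝ × ℝ² × ℝ²` into a group. -/
theorem galExt_is_group (m lam : ℝ) :
    (∀ g g' g'' : GalExt, galMul m lam (galMul m lam g g') g''
        = galMul m lam g (galMul m lam g' g'')) ∧
    (∀ g : GalExt, galMul m lam galOne g = g ∧ galMul m lam g galOne = g) ∧
    (∀ g : GalExt, ∃ h : GalExt,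
        galMul m lam g h = galOne ∧ galMul m lam h g = galOne) :=
  ⟨galMul_assoc m lam, fun g => ⟨galOne_galMul m lam g, galMul_galOne m lam g⟩,
    fun g => ⟨galInv g, galMul_galInv m lam g, galInv_galMul m lam g⟩⟩
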